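/- Let P = (H, V, τ, A) be a span program on [q]^n, let x ∈ [q]^n, let α > 0, and let ω : V → ℂ be a negative witness for x (so ω(τ) = 1 and ω∘A∘Π_{H(x)} = 0). Let r ∈ H denote the Riesz representative of the functional ω∘A on H, and define v := |0̂⟩ + α·r ∈ H̃ (equivalently, v is α times the Riesz representative of the functional h ↦ ω(A_α h) on H̃). Then: (i) Π_x v = |0̂⟩; (ii) v is orthogonal to ker A_α; and (iii) ‖v‖² = 1 + α²‖ω∘A‖². -/

import Mathlib

noncomputable section

/-- A span program `P = (H, V, τ, A)` on `[q]^m`: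
finite-dimensional complex inner product spaces `H` and `V`, an orthogonal
decomposition `H = H_1 ⊕ ⋯ ⊕ H_m ⊕ H_true ⊕ H_false`, subspaces
`H_{j,a} ⊆ H_j` with `Σ_a H_{j,a} = H_j`, a target `τ ∈ V` and `A : H → V`. -/
structure SpanProgram (q m : ℕ) where
  H : Type
  V : Type
  [nH : NormedAddCommGroup H]
  [iH : InnerProductSpace ℂ H]
  [fH : FiniteDimensional ℂ H]
  [nV : NormedAddCommGroup V]
  [iV : InnerProductSpace ℂ V]
  [fV : FiniteDimensional ℂ V]
  Hj : Fin m → Submodule ℂ H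
  Htrue : Submodule ℂ H
  Hfalse : Submodule ℂ H
  ortho : ∀ i i' : Fin m ⊕ Bool, i ≠ i' →
    (Sum.elim Hj (fun b => if b then Htrue else Hfalse) i).IsOrtho
      (Sum.elim Hj (fun b => if b then Htrue else Hfalse) i')
  spans : (⨆ j, Hj j) ⊔ Htrue ⊔ Hfalse = ⊤
  Hja : Fin m → Fin q → Submodule ℂ H
  Hja_le : ∀ j a, Hja j a ≤ Hj j
  Hja_sup : ∀ j, (⨆ a, Hja j a) = Hj j
  tau : V
  A : H →ₗ[ℂ] V

attribute [instance] SpanProgram.nH SpanProgram.iH SpanProgram.fH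
attribute [instance] SpanProgram.nV SpanProgram.iV SpanProgram.fV

namespace SpanProgram

variable {q m : ℕ} (P : SpanProgram q m)

/-- `H(x) = H_{1,x_1} ⊕ ⋯ ⊕ H_{m,x_m} ⊕ H_true`. -/
def Hx (x : Fin m → Fin q) : Submodule ℂ P.H :=
  (⨆ j, P.Hja j (x j)) ⊔ P.Htrue

/-- `w` is a positive witness for `x`: `w ∈ H(x)` and `A w = τ`. -/
def PosWitness (x : Fin m → Fin q) (w : P.H) : Prop :=
  w ∈ P.Hx x ∧ P.A w = P.tau

/-- `ω` is a negative witness for `x`: `ω(τ) = 1` and `ω ∘ A ∘ Π_{H(x)} = 0`. -/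
def NegWitness (x : Fin m → Fin q) (ω : P.V →ₗ[ℂ] ℂ) : Prop :=
  ω P.tau = 1 ∧ ∀ h ∈ P.Hx x, ω (P.A h) = 0

def HasPos (x : Fin m → Fin q) : Prop := ∃ w, P.PosWitness x w

def HasNeg (x : Fin m → Fin q) : Prop := ∃ ω, P.NegWitness x ω

/-- positive witness size: `min{‖w‖² : w a positive witness for x}`. -/
def posSize (x : Fin m → Fin q) : ℝ :=
  sInf {r : ℝ | ∃ w, P.PosWitness x w ∧ r = ‖w‖ ^ 2}

/-- negative witness size: `min{‖ω∘A‖² : ω a negative witness for x}`, where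
`‖ω∘A‖` is the norm of (the Riesz representative of) the functional `ω∘A`. -/
def negSize (x : Fin m → Fin q) : ℝ :=
  sInf {r : ℝ | ∃ ω, P.NegWitness x ω ∧
    r = ‖LinearMap.toContinuousLinearMap (ω ∘ₗ P.A)‖ ^ 2}

open Classical in
/-- the witness size `w(P,x)`. -/
def witSize (x : Fin m → Fin q) : ℝ :=
  if P.HasPos x then P.posSize x else P.negSize x

/-- `P` decides `f` on `X`: every `x ∈ X` with `f x = 1` has a positive witness and
every `x ∈ X` with `f x = 0` has a negative witness. -/
def Decides (X : Set (Fin m → Fin q)) (f : (Fin m → Fin q) → Bool) : Prop :=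
  ∀ x ∈ X, (f x = true → P.HasPos x) ∧ (f x = false → P.HasNeg x)

end SpanProgram


namespace SpanProgram

variable {q m : ℕ} (P : SpanProgram q m)

/-- `H̃ = H ⊕ ℂ|0̂⟩` (with the `L²` direct-sum inner product). -/
def Htilde : Type := WithLp 2 (P.H × ℂ)

instance : NormedAddCommGroup P.Htilde :=
  inferInstanceAs (NormedAddCommGroup (WithLp 2 (P.H × ℂ)))
instance : InnerProductSpace ℂ P.Htilde :=
  inferInstanceAs (InnerProductSpace ℂ (WithLp 2 (P.H × ℂ)))
instance : FiniteDimensional ℂ P.Htilde :=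
  inferInstanceAs (FiniteDimensional ℂ (WithLp 2 (P.H × ℂ)))

/-- the canonical linear identification of `H̃` with `H × ℂ`. -/
def tildeEquiv : P.Htilde ≃ₗ[ℂ] P.H × ℂ := WithLp.linearEquiv 2 ℂ (P.H × ℂ)

/-- the unit vector `|0̂⟩ ∈ H̃`, orthogonal to `H`. -/
def zeroHat : P.Htilde := P.tildeEquiv.symm (0, 1)

/-- the isometric embedding of `H` into `H̃`. -/
def embed : P.H →ₗ[ℂ] P.Htilde :=
  P.tildeEquiv.symm.toLinearMap ∘ₗ LinearMap.inl ℂ P.H ℂ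

/-- `A_α : H̃ → V`, with `A_α|0̂⟩ = τ/α` and `A_α = A` on `H`. -/
def Aalpha (α : ℝ) : P.Htilde →ₗ[ℂ] P.V :=
  (P.A.coprod (LinearMap.toSpanSingleton ℂ P.V (((α : ℂ))⁻¹ • P.tau))) ∘ₗ
    P.tildeEquiv.toLinearMap

/-- `H̃(x) = H(x) ⊕ ℂ|0̂⟩`. -/
def HxTilde (x : Fin m → Fin q) : Submodule ℂ P.Htilde :=
  ((P.Hx x).prod (⊤ : Submodule ℂ ℂ)).comap P.tildeEquiv.toLinearMap

/-- orthogonal projection onto a submodule, as an endomorphism. -/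
def projL (S : Submodule ℂ P.Htilde) : P.Htilde →ₗ[ℂ] P.Htilde :=
  S.subtype ∘ₗ (S.orthogonalProjection).toLinearMap

/-- `Λ_α`: the orthogonal projection of `H̃` onto `ker A_α`. -/
def Lambda (α : ℝ) : P.Htilde →ₗ[ℂ] P.Htilde :=
  P.projL (LinearMap.ker (P.Aalpha α))

/-- `Π_x`: the orthogonal projection of `H̃` onto `H̃(x)`. -/
def Pix (x : Fin m → Fin q) : P.Htilde →ₗ[ℂ] P.Htilde :=
  P.projL (P.HxTilde x)

/-- `U(P, x, α) = (2Π_x − I)(2Λ_α − I)`. -/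
def U (x : Fin m → Fin q) (α : ℝ) : P.Htilde →ₗ[ℂ] P.Htilde :=
  (2 • P.Pix x - LinearMap.id) ∘ₗ (2 • P.Lambda α - LinearMap.id)

end SpanProgram


/-!
Write `u ∈ H̃` as `u_H + u₀ |0̂⟩`. If `r` represents `ω ∘ A`, then, using `ω τ = 1`,
`⟪|0̂⟩ + α r, u⟫ = u₀ + α ω(A u_H) = α ω(A_α u)`, so `v ⊥ ker A_α`. Since `ω ∘ A` vanishes on
`H(x)`, `r ⊥ H(x)`; thus `Π_x` fixes `|0̂⟩ ∈ H̃(x)` and kills `r`. The norm identity is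
Pythagoras in `H ⊕ ℂ`.
-/

open scoped InnerProductSpace

namespace SpanProgram

variable {q m : ℕ} (P : SpanProgram q m)

theorem inner_htilde (u w : P.Htilde) :
    ⟪u, w⟫_ℂ = ⟪(P.tildeEquiv u).1, (P.tildeEquiv w).1⟫_ℂ +
      ⟪(P.tildeEquiv u).2, (P.tildeEquiv w).2⟫_ℂ :=
  rfl

theorem norm_sq_htilde (u : P.Htilde) :
    ‖u‖ ^ 2 = ‖(P.tildeEquiv u).1‖ ^ 2 + ‖(P.tildeEquiv u).2‖ ^ 2 :=
  WithLp.prod_norm_sq_eq_of_L2 _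

@[simp]
theorem tildeEquiv_zeroHat : P.tildeEquiv P.zeroHat = (0, 1) :=
  rfl

@[simp]
theorem tildeEquiv_embed (h : P.H) : P.tildeEquiv (P.embed h) = (h, 0) :=
  rfl

theorem Aalpha_apply (α : ℝ) (u : P.Htilde) :
    P.Aalpha α u = P.A (P.tildeEquiv u).1 + ((P.tildeEquiv u).2 / α) • P.tau := by
  simp [Aalpha, div_eq_mul_inv, mul_smul]

theorem inner_zeroHat_left (u : P.Htilde) : ⟪P.zeroHat, u⟫_ℂ = (P.tildeEquiv u).2 := by
  simp [inner_htilde]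

theorem inner_embed_left (h : P.H) (u : P.Htilde) :
    ⟪P.embed h, u⟫_ℂ = ⟪h, (P.tildeEquiv u).1⟫_ℂ := by
  simp [inner_htilde]

theorem mem_HxTilde {x : Fin m → Fin q} {u : P.Htilde} :
    u ∈ P.HxTilde x ↔ (P.tildeEquiv u).1 ∈ P.Hx x := by
  simp [HxTilde]

theorem zeroHat_mem_HxTilde (x : Fin m → Fin q) : P.zeroHat ∈ P.HxTilde x := by
  simp [mem_HxTilde]

theorem embed_mem_orthogonal_HxTilde {x : Fin m → Fin q} {h : P.H} (hh : h ∈ (P.Hx x)ᗮ) :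
    P.embed h ∈ (P.HxTilde x)ᗮ := by
  rw [Submodule.mem_orthogonal']
  intro u hu
  rw [inner_embed_left]
  exact (Submodule.mem_orthogonal' _ _).1 hh _ (P.mem_HxTilde.1 hu)

theorem Pix_apply (x : Fin m → Fin q) (u : P.Htilde) :
    P.Pix x u = (P.HxTilde x).starProjection u :=
  rfl

theorem Pix_zeroHat_add_embed {x : Fin m → Fin q} {h : P.H} (hh : h ∈ (P.Hx x)ᗮ) (c : ℂ) :
    P.Pix x (P.zeroHat + c • P.embed h) = P.zeroHat := by
  rw [Pix_apply, map_add, map_smul,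
    Submodule.starProjection_eq_self_iff.2 (P.zeroHat_mem_HxTilde x),
    (Submodule.starProjection_apply_eq_zero_iff _).2 (P.embed_mem_orthogonal_HxTilde hh),
    smul_zero, add_zero]

variable {P} in
theorem NegWitness.orthogonal_of_inner {x : Fin m → Fin q} {ω : P.V →ₗ[ℂ] ℂ}
    (hω : P.NegWitness x ω) {r : P.H} (hr : ∀ h, ⟪r, h⟫_ℂ = ω (P.A h)) : r ∈ (P.Hx x)ᗮ :=
  (Submodule.mem_orthogonal' _ _).2 fun h hh => (hr h).trans (hω.2 h hh)

theorem inner_zeroHat_add_embed {ω : P.V →ₗ[ℂ] ℂ} (hτ : ω P.tau = 1) {r : P.H}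
    (hr : ∀ h, ⟪r, h⟫_ℂ = ω (P.A h)) {α : ℝ} (hα : α ≠ 0) (u : P.Htilde) :
    ⟪P.zeroHat + (α : ℂ) • P.embed r, u⟫_ℂ = α * ω (P.Aalpha α u) := by
  have hαC : (α : ℂ) ≠ 0 := Complex.ofReal_ne_zero.2 hα
  rw [inner_add_left, inner_smul_left, inner_zeroHat_left, inner_embed_left, hr, Aalpha_apply,
    map_add, map_smul, hτ, Complex.conj_ofReal, smul_eq_mul, mul_one]
  field_simp
  ring

theorem zeroHat_add_embed_mem_orthogonal_ker {ω : P.V →ₗ[ℂ] ℂ} (hτ : ω P.tau = 1) {r : P.H}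
    (hr : ∀ h, ⟪r, h⟫_ℂ = ω (P.A h)) {α : ℝ} (hα : α ≠ 0) :
    P.zeroHat + (α : ℂ) • P.embed r ∈ (LinearMap.ker (P.Aalpha α))ᗮ :=
  (Submodule.mem_orthogonal' _ _).2 fun u hu => by
    rw [P.inner_zeroHat_add_embed hτ hr hα, LinearMap.mem_ker.1 hu, map_zero, mul_zero]

theorem norm_sq_zeroHat_add_embed (h : P.H) (α : ℝ) :
    ‖P.zeroHat + (α : ℂ) • P.embed h‖ ^ 2 = 1 + α ^ 2 * ‖h‖ ^ 2 := by
  rw [norm_sq_htilde, map_add, map_smul, tildeEquiv_zeroHat, tildeEquiv_embed]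
  simp [norm_smul, mul_pow, add_comm]

end SpanProgram

theorem negative_witness_vector_general {q n : ℕ}
    (P : SpanProgram q n) (x : Fin n → Fin q) (α : ℝ) (hα : 0 < α)
    (ω : P.V →ₗ[ℂ] ℂ) (hω : P.NegWitness x ω)
    (r : P.H)
    (hr : r = (InnerProductSpace.toDual ℂ P.H).symm
      (LinearMap.toContinuousLinearMap (ω ∘ₗ P.A)))
    (v : P.Htilde) (hv : v = P.zeroHat + (α : ℂ) • P.embed r) :
    P.Pix x v = P.zeroHat ∧ v ∈ (LinearMap.ker (P.Aalpha α))ᗮ ∧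
      ‖v‖ ^ 2 = 1 + α ^ 2 * ‖r‖ ^ 2 := by
  have hr_inner : ∀ h, ⟪r, h⟫_ℂ = ω (P.A h) := fun h => by
    rw [hr, InnerProductSpace.toDual_symm_apply]
    rfl
  subst hv
  exact ⟨P.Pix_zeroHat_add_embed (hω.orthogonal_of_inner hr_inner) α,
    P.zeroHat_add_embed_mem_orthogonal_ker hω.1 hr_inner hα.ne',
    P.norm_sq_zeroHat_add_embed r α⟩

/-- for a negative witness `ω` for `x` with Riesz representative `r`
of `ω∘A`, the vector `v = |0̂⟩ + α·r` satisfies `Π_x v = |0̂⟩`, `v ⊥ ker A_α`, and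
`‖v‖² = 1 + α²‖ω∘A‖²`. -/
theorem negative_witness_vector {q n : ℕ} (hq : 2 ≤ q) (hn : 1 ≤ n)
    (P : SpanProgram q n) (x : Fin n → Fin q) (α : ℝ) (hα : 0 < α)
    (ω : P.V →ₗ[ℂ] ℂ) (hω : P.NegWitness x ω)
    (r : P.H)
    (hr : r = (InnerProductSpace.toDual ℂ P.H).symm
      (LinearMap.toContinuousLinearMap (ω ∘ₗ P.A)))
    (v : P.Htilde) (hv : v = P.zeroHat + (α : ℂ) • P.embed r) :
    P.Pix x v = P.zeroHat ∧ v ∈ (LinearMap.ker (P.Aalpha α))ᗮ ∧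
      ‖v‖ ^ 2 = 1 + α ^ 2 * ‖r‖ ^ 2 :=
  negative_witness_vector_general P x α hα ω hω r hr v hv
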